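/- Let n ≥ 2 and let G_0 := (e_0e_0*, …, e_{n−1}e_{n−1}*). For each k ∈ {1,…,2n−3}, let v_k, w_k ∈ ℝ^{γ(n,k)} be vectors all of whose entries are nonzero. Let G be the concatenation G_0 ∪ (ι_1(v_1), ι_1(iw_1)) ∪ … ∪ (ι_{2n−3}(v_{2n−3}), ι_{2n−3}(iw_{2n−3})). Then the measurement M_G : H(n) → ℝ^{5n−6}, X ↦ (tr(G_j X))_j, is 1-complete, and |G| = 5n−6. -/

import Mathlib

/-!
The diagonal measurements give `X i i = X' i i`. A positive semidefinite `X` of rank at most one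
has vanishing `2 × 2` minors, so for `X m m ≠ 0` the vector `u = X m j • e_m - X m m • e_j` lies in
the kernel of `X`. Its quadratic form only sees the `{m, j}` block, so if `X` and `X'` agree there,
`u* X' u = 0` and `u` lies in the kernel of the positive semidefinite `X'` too; comparing `X u` and
`X' u` propagates agreement from `(m, j)` and `(l, m)` to `(l, j)`.

Let `j₀` be the first index with `X j₀ j₀ ≠ 0`; the rows above `j₀` vanish in both matrices. Run
through the anti-diagonals in order. An entry `(p, q)` with `j₀ < p < q` follows by propagation
from `(j₀, p)` and `(j₀, q)`, which lie on earlier anti-diagonals. Hence on the anti-diagonal of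
`(j₀, q)` the difference `D = X' - X` is supported on `(j₀, q)` and `(q, j₀)`, where the
measurements `ι(v)` and `ι(i w)` return `√2 v₀ Re (D q j₀)` and `-√2 w₀ Im (D q j₀)` for the
nonzero coefficients `v₀`, `w₀` at that position.
-/

open Matrix
open scoped ComplexOrder

noncomputable section

noncomputable def measOf {n : ℕ} {ι : Type*} [Fintype ι]
    (G : ι → Matrix (Fin n) (Fin n) ℂ) :
    Matrix (Fin n) (Fin n) ℂ →ₗ[ℝ] EuclideanSpace ℝ ι where
  toFun X := WithLp.toLp 2 (fun i => ((G i * X).trace).re)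
  map_add' X Y := by
    ext i
    simp [Matrix.mul_add]
  map_smul' r X := by
    ext i
    simp [Matrix.mul_smul, Matrix.trace_smul, Complex.real_smul]

def rComplete {n : ℕ} {ι : Type*} [Fintype ι]
    (M : Matrix (Fin n) (Fin n) ℂ →ₗ[ℝ] EuclideanSpace ℝ ι) (r : ℕ) : Prop :=
  ∀ X X' : Matrix (Fin n) (Fin n) ℂ, X.PosSemidef → X.rank ≤ r → X'.PosSemidef →
    X ≠ X' → M X ≠ M X'

/-- `γ(n,k)`, the length of the upper half of the `k`-th anti-diagonal of an `n×n` matrix: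
`⌈k/2⌉` if `k ≤ n−1` and `⌈n−1−k/2⌉` otherwise. -/
def gam (n k : ℕ) : ℕ := if k ≤ n - 1 then (k + 1) / 2 else n - 1 - k / 2

/-- Extension of a finite vector by zero. -/
def pad {m : ℕ} (v : Fin m → ℂ) : ℕ → ℂ := fun i => if h : i < m then v ⟨i, h⟩ else 0

/-- The inclusion `ι_k : ℂ^{γ(n,k)} → H(n)` into the upper half of the `k`-th anti-diagonal:
`(ι_k(v))_{jl} = v_j/√2` if `j+l = k`, `j < l`; `(ι_k(v))_{jl} = conj(v_l)/√2` if `j+l = k`,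
`l < j`; and `0` otherwise.  (The entries of `v` are indexed by the position along the upper
half of the anti-diagonal, whose rows start at `k − (n−1)` when `k > n−1`.) -/
noncomputable def iota (n k : ℕ) (v : Fin (gam n k) → ℂ) : Matrix (Fin n) (Fin n) ℂ :=
  fun j l =>
    if (j : ℕ) + (l : ℕ) = k ∧ (j : ℕ) < (l : ℕ) then
      pad v ((j : ℕ) - (k - (n - 1))) / (Real.sqrt 2 : ℂ)
    else if (j : ℕ) + (l : ℕ) = k ∧ (l : ℕ) < (j : ℕ) then
      starRingEnd ℂ (pad v ((l : ℕ) - (k - (n - 1)))) / (Real.sqrt 2 : ℂ)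
    else 0

namespace Matrix

variable {n 𝕜 : Type*} [RCLike 𝕜]

lemma IsHermitian.apply_eq_of_apply_eq_swap {X X' : Matrix n n 𝕜} (hX : X.IsHermitian)
    (hX' : X'.IsHermitian) {p q : n} (h : X p q = X' p q) : X q p = X' q p := by
  rw [← hX.apply q p, ← hX'.apply q p, h]

lemma trace_mul_eq_of_mul_apply_eq_zero {R : Type*} [Fintype n] [NonUnitalNonAssocSemiring R]
    {A D : Matrix n n R} {j l : n} (hjl : j ≠ l)
    (h : ∀ p q, (p, q) ≠ (j, l) → (p, q) ≠ (l, j) → A p q * D q p = 0) :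
    (A * D).trace = A j l * D l j + A l j * D j l := by
  simp only [trace, diag, mul_apply]
  rw [← Fintype.sum_prod_type', Fintype.sum_eq_add (j, l) (l, j) (by simp [hjl])
    (fun x hx => h x.1 x.2 hx.1 hx.2)]

variable [Fintype n]

lemma PosSemidef.apply_eq_zero_of_apply_self_eq_zero {A : Matrix n n 𝕜} (hA : A.PosSemidef)
    {j : n} (h : A j j = 0) (l : n) : A j l = 0 := by
  classical
  have hcol : A *ᵥ Pi.single j 1 = 0 := (hA.dotProduct_mulVec_zero_iff _).1 (by simp [h])
  have hlj : A l j = 0 := by simpa using congrFun hcol l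
  rw [← hA.1.apply j l, hlj, star_zero]

lemma mul_apply_eq_of_rank_le_one {m K : Type*} [Field K] {A : Matrix m n K}
    (h : A.rank ≤ 1) (p r : m) (q s : n) : A p q * A r s = A p s * A r q := by
  classical
  obtain ⟨u, hu⟩ := finrank_le_one_iff.mp h
  have hcol : ∀ q, ∃ c : K, ∀ p, A p q = c * (u : m → K) p := by
    intro q
    obtain ⟨c, hc⟩ := hu ⟨A.col q, Pi.single q 1, by simp⟩
    exact ⟨c, fun p => by simpa using congrFun (congrArg Subtype.val hc).symm p⟩
  obtain ⟨cq, hcq⟩ := hcol q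
  obtain ⟨cs, hcs⟩ := hcol s
  rw [hcq, hcs, hcq, hcs]
  ring

lemma apply_eq_of_rank_le_one_of_posSemidef {X X' : Matrix n n 𝕜} (hX : X.IsHermitian)
    (hrank : X.rank ≤ 1) (hX' : X'.PosSemidef) {m j l : n} (hm : X m m ≠ 0)
    (hmm : X m m = X' m m) (hjj : X j j = X' j j) (hmj : X m j = X' m j)
    (hlm : X l m = X' l m) : X l j = X' l j := by
  classical
  have hminor := mul_apply_eq_of_rank_le_one hrank
  have hjm : X j m = X' j m := by rw [← hX.apply j m, ← hX'.1.apply j m, hmj]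
  set u : n → 𝕜 := Pi.single m (X m j) - Pi.single j (X m m)
  have hXu : X *ᵥ u = 0 := by
    funext p
    simp only [u, mulVec_sub, mulVec_single, Pi.sub_apply, Pi.zero_apply, Pi.smul_apply,
      col_apply, MulOpposite.smul_eq_mul_unop, MulOpposite.unop_op]
    linear_combination hminor p m m j
  have hquad : star u ⬝ᵥ X' *ᵥ u = star u ⬝ᵥ X *ᵥ u := by
    simp [u, mulVec_sub, sub_dotProduct, hmm, hjj, hmj, hjm]
  have hX'u : X' *ᵥ u = 0 :=
    (hX'.dotProduct_mulVec_zero_iff u).1 (by rw [hquad, hXu, dotProduct_zero])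
  have hl : X l m * X m j - X l j * X m m = X' l m * X m j - X' l j * X m m := by
    simpa [u, mulVec_sub, mul_comm] using (congrFun hXu l).trans (congrFun hX'u l).symm
  rw [hlm] at hl
  exact mul_right_cancel₀ hm (by linear_combination -hl)

end Matrix

section Iota

variable {n k : ℕ}

lemma sub_lt_gam {j l : ℕ} (hl : l < n) (hk : j + l = k) (hjl : j < l) :
    j - (k - (n - 1)) < gam n k := by
  unfold gam
  split <;> omega

lemma iota_apply_of_add_ne (c : Fin (gam n k) → ℂ) {p q : Fin n} (h : (p : ℕ) + q ≠ k) :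
    iota n k c p q = 0 := by
  simp [iota, h]

lemma iota_apply_of_lt (c : Fin (gam n k) → ℂ) {j l : Fin n} (hk : (j : ℕ) + l = k)
    (hjl : j < l) :
    iota n k c j l = c ⟨j - (k - (n - 1)), sub_lt_gam l.isLt hk hjl⟩ / (Real.sqrt 2 : ℂ) := by
  simp [iota, pad, hk, hjl, sub_lt_gam l.isLt hk hjl]

lemma iota_apply_of_gt (c : Fin (gam n k) → ℂ) {j l : Fin n} (hk : (j : ℕ) + l = k)
    (hjl : j < l) :
    iota n k c l j =
      starRingEnd ℂ (c ⟨j - (k - (n - 1)), sub_lt_gam l.isLt hk hjl⟩) / (Real.sqrt 2 : ℂ) := by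
  simp [iota, pad, add_comm (l : ℕ), hk, hjl, hjl.not_gt, sub_lt_gam l.isLt hk hjl]

lemma re_trace_iota_mul {D : Matrix (Fin n) (Fin n) ℂ} (hD : D.IsHermitian)
    (c : Fin (gam n k) → ℂ) {j l : Fin n} (hk : (j : ℕ) + l = k) (hjl : j < l)
    (hoff : ∀ p q : Fin n, (p : ℕ) + q = k → p ≠ j → p ≠ l → D p q = 0) :
    (iota n k c * D).trace.re =
      Real.sqrt 2 * (c ⟨j - (k - (n - 1)), sub_lt_gam l.isLt hk hjl⟩ * D l j).re := by
  have hvanish : ∀ p q, (p, q) ≠ (j, l) → (p, q) ≠ (l, j) → iota n k c p q * D q p = 0 := by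
    intro p q hjl' hlj'
    by_cases hpq : (p : ℕ) + q = k
    · have hq : q ≠ j ∧ q ≠ l := by
        constructor <;> rintro rfl <;> simp_all [Fin.ext_iff] <;> omega
      rw [hoff q p (by omega) hq.1 hq.2, mul_zero]
    · rw [iota_apply_of_add_ne c hpq, zero_mul]
  rw [trace_mul_eq_of_mul_apply_eq_zero hjl.ne hvanish, iota_apply_of_lt c hk hjl,
    iota_apply_of_gt c hk hjl, ← hD.apply j l]
  set c₀ := c ⟨j - (k - (n - 1)), sub_lt_gam l.isLt hk hjl⟩
  have hsum : c₀ / (Real.sqrt 2 : ℂ) * D l j + starRingEnd ℂ c₀ / (Real.sqrt 2 : ℂ) * star (D l j) =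
      (c₀ * D l j + starRingEnd ℂ (c₀ * D l j)) / (Real.sqrt 2 : ℂ) := by
    simp only [map_mul, Complex.star_def]
    ring
  rw [hsum, Complex.add_conj, ← Complex.ofReal_div, Complex.ofReal_re]
  have hsqrt2 : Real.sqrt 2 ^ 2 = 2 := Real.sq_sqrt (by norm_num)
  field_simp
  rw [hsqrt2]
  ring

lemma apply_eq_zero_of_re_trace_iota_mul_eq_zero {D : Matrix (Fin n) (Fin n) ℂ}
    (hD : D.IsHermitian) {v w : Fin (gam n k) → ℝ} (hv : ∀ i, v i ≠ 0) (hw : ∀ i, w i ≠ 0)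
    {j l : Fin n} (hk : (j : ℕ) + l = k) (hjl : j < l)
    (hoff : ∀ p q : Fin n, (p : ℕ) + q = k → p ≠ j → p ≠ l → D p q = 0)
    (hvD : (iota n k (fun i => (v i : ℂ)) * D).trace.re = 0)
    (hwD : (iota n k (fun i => Complex.I * (w i : ℂ)) * D).trace.re = 0) : D l j = 0 := by
  rw [re_trace_iota_mul hD _ hk hjl hoff] at hvD hwD
  exact Complex.ext (by simpa [hv] using hvD) (by simpa [hw] using hwD)

end Iota

section Propagation

variable {n : ℕ} {𝕜 : Type*} [RCLike 𝕜] {X X' : Matrix (Fin n) (Fin n) 𝕜}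

lemma apply_eq_of_lt_of_first_nonzero_diag (hX : X.PosSemidef) (hrank : X.rank ≤ 1)
    (hX' : X'.PosSemidef) (hdiag : ∀ i, X i i = X' i i)
    (hanti : ∀ j l : Fin n, j < l →
      (∀ p q : Fin n, (p : ℕ) + q = j + l → p ≠ j → p ≠ l → X p q = X' p q) → X l j = X' l j)
    {j₀ : Fin n} (hj₀ : X j₀ j₀ ≠ 0) (hbefore : ∀ p < j₀, X p p = 0) :
    ∀ p q : Fin n, p < q → X p q = X' p q := by
  have hswap {p q : Fin n} (h : X p q = X' p q) : X q p = X' q p :=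
    hX.1.apply_eq_of_apply_eq_swap hX'.1 h
  have hrow : ∀ p < j₀, ∀ q, X p q = X' p q := fun p hp q => by
    rw [hX.apply_eq_zero_of_apply_self_eq_zero (hbefore p hp),
      hX'.apply_eq_zero_of_apply_self_eq_zero (hdiag p ▸ hbefore p hp)]
  suffices ∀ s, ∀ p q : Fin n, (p : ℕ) + q = s → p < q → X p q = X' p q from
    fun p q => this _ p q rfl
  intro s
  induction s using Nat.strong_induction_on with
  | _ s IH =>
  have hoff : ∀ p q : Fin n, (p : ℕ) + q = s → p < q → p ≠ j₀ → X p q = X' p q := by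
    intro p q hs hpq hp
    rcases hp.lt_or_gt with hp | hp
    · exact hrow p hp q
    · exact hswap <| apply_eq_of_rank_le_one_of_posSemidef hX.1 hrank hX' hj₀ (hdiag j₀)
        (hdiag p) (IH _ (by omega) j₀ p rfl hp)
        (hswap (IH _ (by omega) j₀ q rfl (hp.trans hpq)))
  intro p q hs hpq
  rcases eq_or_ne p j₀ with rfl | hp
  · refine hswap (hanti p q hpq fun p' q' hs' hp' hq' => ?_)
    rcases lt_trichotomy p' q' with h | rfl | h
    · exact hoff p' q' (by omega) h hp'
    · exact hdiag p'
    · exact hswap (hoff q' p' (by omega) h (by rintro rfl; omega))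
  · exact hoff p q hs hpq hp

theorem eq_of_rank_le_one_of_antidiagonal (hX : X.PosSemidef) (hrank : X.rank ≤ 1)
    (hX' : X'.PosSemidef) (hdiag : ∀ i, X i i = X' i i)
    (hanti : ∀ j l : Fin n, j < l →
      (∀ p q : Fin n, (p : ℕ) + q = j + l → p ≠ j → p ≠ l → X p q = X' p q) → X l j = X' l j) :
    X = X' := by
  by_cases hzero : ∀ i, X i i = 0
  · ext p q
    rw [hX.apply_eq_zero_of_apply_self_eq_zero (hzero p),
      hX'.apply_eq_zero_of_apply_self_eq_zero (hdiag p ▸ hzero p)]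
  push Not at hzero
  obtain ⟨j₀, hj₀, hmin⟩ := wellFounded_lt.has_min {i | X i i ≠ 0} hzero
  have hupper := apply_eq_of_lt_of_first_nonzero_diag hX hrank hX' hdiag hanti hj₀
    fun p hp => by_contra fun h => hmin p h hp
  ext p q
  rcases lt_trichotomy p q with h | rfl | h
  · exact hupper p q h
  · exact hdiag p
  · exact hX.1.apply_eq_of_apply_eq_swap hX'.1 (hupper q p h)

end Propagation

/-- the measurement built from `e_0e_0*, …, e_{n−1}e_{n−1}*` together with
`ι_k(v_k)` and `ι_k(i·w_k)` for `k = 1,…,2n−3`, where all entries of `v_k, w_k ∈ ℝ^{γ(n,k)}`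
are nonzero, is `1`-complete, with `5n−6` outcomes. -/
theorem stmt6 {n : ℕ} (hn : 2 ≤ n)
    (v w : (k : Fin (2 * n - 3)) → Fin (gam n ((k : ℕ) + 1)) → ℝ)
    (hv : ∀ k j, v k j ≠ 0) (hw : ∀ k j, w k j ≠ 0) :
    rComplete (measOf (fun idx : Fin n ⊕ Fin (2 * n - 3) × Bool =>
      match idx with
      | Sum.inl i => Matrix.single i i (1 : ℂ)
      | Sum.inr (k, false) => iota n ((k : ℕ) + 1) (fun j => ((v k j : ℝ) : ℂ))
      | Sum.inr (k, true) => iota n ((k : ℕ) + 1) (fun j => Complex.I * ((w k j : ℝ) : ℂ)))) 1 ∧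
    Fintype.card (Fin n ⊕ Fin (2 * n - 3) × Bool) = 5 * n - 6 := by
  refine ⟨fun X X' hX hrank hX' hne hM => hne ?_, by simp; omega⟩
  have hD : (X' - X).IsHermitian := hX'.1.sub hX.1
  have hmeas := fun i => congrArg (· i) (show measOf _ (X' - X) = 0 by rw [map_sub, hM, sub_self])
  refine eq_of_rank_le_one_of_antidiagonal hX hrank hX' (fun i => ?_) fun j l hjl hoff => ?_
  · have hii : (X' - X) i i = 0 := by
      rw [← hD.coe_re_apply_self, RCLike.ofReal_eq_zero]
      simpa [measOf, trace_single_mul] using hmeas (Sum.inl i)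
    exact (sub_eq_zero.1 hii).symm
  · obtain ⟨κ, hκ⟩ : ∃ κ : Fin (2 * n - 3), (j : ℕ) + l = κ + 1 :=
      ⟨⟨j + l - 1, by omega⟩, by simp; omega⟩
    have := apply_eq_zero_of_re_trace_iota_mul_eq_zero hD (hv κ) (hw κ) hκ hjl
      (fun p q hs hp hq => sub_eq_zero.2 (hoff p q (hs.trans hκ.symm) hp hq).symm)
      (hmeas (.inr (κ, false))) (hmeas (.inr (κ, true)))
    exact (sub_eq_zero.1 this).symm
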